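/- Equal slopes case: Let n be an odd prime, r₁,s₁,r₂,s₂ nonzero in ZMod n with r₁s₂ = r₂s₁, and let k = r₁⁻¹r₂ = s₁⁻¹s₂. Then the eigenvalues of M = ½(M(r₁,s₁) + M(r₂,s₂)) are λ_d = ½(cos(2πd/n) + cos(2π(−k(k−1)r₁s₁/2 + kd)/n)) for d = 0,…,n−1. -/

import Mathlib

open Matrix

/-- `ω n = e^{2πi/n}`. -/
noncomputable def omg (n : ℕ) : ℂ := Complex.exp (2 * Real.pi * Complex.I / n)

/-- The cyclic shift matrix: `S_{i,j} = 1` iff `i + 1 = j` in `ZMod n`. -/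
noncomputable def Smat (n : ℕ) : Matrix (ZMod n) (ZMod n) ℂ :=
  Matrix.of fun i j => if i + 1 = j then 1 else 0

/-- The diagonal matrix `R` with `R_{j,j} = ω^j`. -/
noncomputable def Rmat (n : ℕ) : Matrix (ZMod n) (ZMod n) ℂ :=
  Matrix.diagonal fun j => omg n ^ (j.val)

/-- The twisted circulant `A(r,s) = R^r S^s`. -/
noncomputable def Amat (n : ℕ) [NeZero n] (r s : ZMod n) : Matrix (ZMod n) (ZMod n) ℂ :=
  Rmat n ^ r.val * Smat n ^ s.val

/-- The Hermitian matrix `M(r,s) = ½(A(r,s) + A(r,s)*)`. -/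
noncomputable def Mmat (n : ℕ) [NeZero n] (r s : ZMod n) : Matrix (ZMod n) (ZMod n) ℂ :=
  (1 / 2 : ℂ) • (Amat n r s + (Amat n r s)ᴴ)

/-- The ℓ²-operator norm of a matrix. -/
noncomputable def opNorm {n : ℕ} [NeZero n] (M : Matrix (ZMod n) (ZMod n) ℂ) : ℝ :=
  ‖Matrix.toEuclideanCLM (𝕜 := ℂ) M‖

/-!
Since `r₂ = k r₁` and `s₂ = k s₁`, both summands are `M(k r, k s)` for one pair `(r, s)`. With
`ψ = ZMod.stdAddChar` and `m = s⁻¹ j`, the vectors `v_d(j) = ψ(m d - r s m (m - 1) / 2)` are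
common eigenvectors of every `A(k r, k s) = R^{kr} S^{ks}`, with eigenvalue
`ψ(k d - k (k - 1) r s / 2)`. By orthogonality of characters the matrix `P` with columns `v_d`
satisfies `P Pᴴ = n`, so `P` also diagonalises the adjoints, with conjugate eigenvalues, and
`M(k r, k s) P = P diag(cos(2π (k d - k (k - 1) r s / 2) / n))`. The spectrum of the average is
then read off the diagonal.
-/

open ZMod

local notation "ψ" => ZMod.stdAddChar

section spectrum

variable {ι 𝕜 : Type*} [Fintype ι] [DecidableEq ι] [Field 𝕜]

theorem spectrum_eq_range_of_mul_eq_mul_diagonal {A P : Matrix ι ι 𝕜} {μ : ι → 𝕜}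
    (hP : IsUnit P) (h : A * P = P * diagonal μ) : spectrum 𝕜 A = Set.range μ := by
  obtain ⟨u, rfl⟩ := hP
  have hA : A = u * diagonal μ * ((u⁻¹ : (Matrix ι ι 𝕜)ˣ) : Matrix ι ι 𝕜) := by
    rw [← h, mul_assoc, Units.mul_inv, mul_one]
  rw [hA, spectrum.units_conjugate, spectrum_diagonal]

theorem conjTranspose_mul_eq_mul_diagonal_star [StarRing 𝕜] {A P : Matrix ι ι 𝕜} {μ : ι → 𝕜}
    {c : 𝕜} (hc : c ≠ 0) (hP : P * Pᴴ = c • 1) (h : A * P = P * diagonal μ) :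
    Aᴴ * P = P * diagonal (star μ) := by
  have hPl : Pᴴ * P = c • 1 := by
    have : c⁻¹ • Pᴴ * P = 1 :=
      mul_eq_one_comm.mp (by rw [Matrix.mul_smul, hP, smul_smul, inv_mul_cancel₀ hc, one_smul])
    rwa [Matrix.smul_mul, inv_smul_eq_iff₀ hc] at this
  have hstar : Pᴴ * Aᴴ = diagonal (star μ) * Pᴴ := by
    rw [← conjTranspose_mul, h, conjTranspose_mul, diagonal_conjTranspose]
  calc Aᴴ * P = c⁻¹ • (P * Pᴴ * Aᴴ * P) := by
        rw [hP, Matrix.smul_mul, Matrix.smul_mul, smul_smul, inv_mul_cancel₀ hc, one_smul, one_mul]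
    _ = c⁻¹ • (P * diagonal (star μ) * (Pᴴ * P)) := by
        rw [Matrix.mul_assoc P, hstar, Matrix.mul_assoc, Matrix.mul_assoc, Matrix.mul_assoc]
    _ = P * diagonal (star μ) := by
        rw [hPl, Matrix.mul_smul, Matrix.mul_one, smul_smul, inv_mul_cancel₀ hc, one_smul]

end spectrum

section character

variable {n : ℕ} [NeZero n]

theorem omg_pow (m : ℕ) : omg n ^ m = ψ (m : ZMod n) := by
  rw [stdAddChar_apply, toCircle_natCast, omg, ← Complex.exp_nat_mul]
  ring_nf

theorem star_stdAddChar (a : ZMod n) : star (ψ a) = ψ (-a) := by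
  rw [stdAddChar_apply, stdAddChar_apply, AddChar.map_neg_eq_inv, Circle.coe_inv_eq_conj]
  rfl

theorem stdAddChar_add_star (a : ZMod n) :
    ψ a + star (ψ a) = ((2 * Real.cos (2 * Real.pi * a.val / n) : ℝ) : ℂ) := by
  rw [Complex.star_def, Complex.add_conj, stdAddChar_apply, toCircle_apply,
    ← Complex.exp_ofReal_mul_I_re]
  push_cast
  ring_nf

theorem Smat_pow (m : ℕ) :
    Smat n ^ m = of fun i j => if i + (m : ZMod n) = j then (1 : ℂ) else 0 := by
  induction m with
  | zero => ext i j; simp [one_apply]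
  | succ m ih =>
    rw [pow_succ, ih]
    ext i j
    simp only [Smat, mul_apply, of_apply, ite_mul, one_mul, zero_mul, Finset.sum_ite_eq,
      Finset.mem_univ, if_true]
    push_cast
    rw [add_assoc]

theorem Amat_apply (r s i j : ZMod n) :
    Amat n r s i j = if i + s = j then ψ (r * i) else 0 := by
  rw [Amat, Rmat, diagonal_pow, Smat_pow, diagonal_mul, of_apply, Pi.pow_apply, ← pow_mul,
    omg_pow]
  simp [mul_comm]

end character

section eigenbasis

variable {n : ℕ} [Fact n.Prime]

/- Translating `j` by `k s` translates `m = s⁻¹ j` by `k`; the quadratic phase in `m` changes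
by `k r j` plus a term independent of `j`, which cancels the twist `ψ (k r j)` of `R ^ (k r)`. -/
noncomputable def Pmat (r s : ZMod n) : Matrix (ZMod n) (ZMod n) ℂ :=
  of fun j d => ψ (s⁻¹ * j * d - r * s * 2⁻¹ * (s⁻¹ * j) * (s⁻¹ * j - 1))

def eigenPhase (r s k d : ZMod n) : ZMod n := -(k * (k - 1) * 2⁻¹ * r * s) + k * d

theorem Pmat_mul_conjTranspose {r s : ZMod n} (hs : s ≠ 0) :
    Pmat r s * (Pmat r s)ᴴ = (n : ℂ) • 1 := by
  ext j j'
  set e : ZMod n → ZMod n := fun j => r * s * 2⁻¹ * (s⁻¹ * j) * (s⁻¹ * j - 1)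
  have hterm (d : ZMod n) :
      Pmat r s j d * star (Pmat r s j' d) = ψ (e j' - e j) * ψ (d * (s⁻¹ * (j - j'))) := by
    rw [Pmat, of_apply, of_apply, star_stdAddChar, ← AddChar.map_add_eq_mul,
      ← AddChar.map_add_eq_mul]
    congr 1
    ring
  have ht : s⁻¹ * (j - j') = 0 ↔ j = j' := by simp [hs, sub_eq_zero]
  simp only [mul_apply, conjTranspose_apply, hterm, ← Finset.mul_sum,
    AddChar.sum_mulShift _ (isPrimitive_stdAddChar n), ht, Matrix.smul_apply, ZMod.card]
  split_ifs with hjj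
  · subst hjj
    simp
  · simp [one_apply_ne hjj]

theorem isUnit_Pmat {r s : ZMod n} (hs : s ≠ 0) : IsUnit (Pmat r s) :=
  IsUnit.of_mul_eq_one ((n : ℂ)⁻¹ • (Pmat r s)ᴴ) (by
    rw [Matrix.mul_smul, Pmat_mul_conjTranspose hs, smul_smul,
      inv_mul_cancel₀ (Nat.cast_ne_zero.mpr (NeZero.ne n)), one_smul])

theorem Amat_mul_Pmat (r : ZMod n) {s : ZMod n} (hs : s ≠ 0) (h2 : (2 : ZMod n) ≠ 0)
    (k : ZMod n) :
    Amat n (k * r) (k * s) * Pmat r s = Pmat r s * diagonal (fun d => ψ (eigenPhase r s k d)) := by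
  ext j d
  rw [mul_diagonal, mul_apply]
  simp only [Amat_apply, ite_mul, zero_mul, Finset.sum_ite_eq, Finset.mem_univ, if_true, Pmat,
    of_apply, eigenPhase, ← AddChar.map_add_eq_mul]
  congr 1
  field_simp
  ring

theorem Mmat_mul_Pmat (r : ZMod n) {s : ZMod n} (hs : s ≠ 0) (h2 : (2 : ZMod n) ≠ 0)
    (k : ZMod n) :
    Mmat n (k * r) (k * s) * Pmat r s =
      Pmat r s * diagonal (fun d => (Real.cos (2 * Real.pi * (eigenPhase r s k d).val / n) : ℂ)) := by
  have hn : (n : ℂ) ≠ 0 := Nat.cast_ne_zero.mpr (NeZero.ne n)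
  have hA := Amat_mul_Pmat r hs h2 k
  rw [Mmat, Matrix.smul_mul, Matrix.add_mul, hA,
    conjTranspose_mul_eq_mul_diagonal_star hn (Pmat_mul_conjTranspose hs) hA, ← Matrix.mul_add,
    diagonal_add, ← Matrix.mul_smul, ← diagonal_smul]
  congr 2
  funext d
  simp only [Pi.smul_apply, Pi.star_apply, stdAddChar_add_star, smul_eq_mul]
  push_cast
  ring

end eigenbasis

theorem stmt17_general (n : ℕ) [NeZero n] [Fact (Nat.Prime n)] (hodd : Odd n)
    (r₁ s₁ r₂ s₂ : ZMod n) (hr₁ : r₁ ≠ 0) (hs₁ : s₁ ≠ 0)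
    (h : r₁ * s₂ = r₂ * s₁)
    (k : ZMod n) (hk : k = r₁⁻¹ * r₂) :
    spectrum ℂ ((1 / 2 : ℂ) • (Mmat n r₁ s₁ + Mmat n r₂ s₂)) =
      Set.range (fun d : ZMod n =>
        ((1 / 2 * (Real.cos (2 * Real.pi * d.val / n) +
          Real.cos (2 * Real.pi *
            ((-(k * (k - 1) * (2 : ZMod n)⁻¹ * r₁ * s₁) + k * d).val) / n)) : ℝ) : ℂ)) := by
  have h2 : (2 : ZMod n) ≠ 0 :=
    Ring.two_ne_zero (by rw [ZMod.ringChar_zmod_n]; exact hodd.ne_two_of_dvd_nat dvd_rfl)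
  obtain ⟨rfl, rfl⟩ : r₂ = k * r₁ ∧ s₂ = k * s₁ := by
    subst hk
    constructor <;> field_simp
    linear_combination h
  refine spectrum_eq_range_of_mul_eq_mul_diagonal (isUnit_Pmat (r := r₁) hs₁) ?_
  have h₁ := Mmat_mul_Pmat r₁ hs₁ h2 1
  rw [one_mul, one_mul] at h₁
  rw [Matrix.smul_mul, Matrix.add_mul, h₁, Mmat_mul_Pmat r₁ hs₁ h2 k, ← Matrix.mul_add,
    diagonal_add, ← Matrix.mul_smul, ← diagonal_smul]
  congr 2
  funext d
  simp [eigenPhase]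

theorem stmt17 (n : ℕ) [NeZero n] [Fact (Nat.Prime n)] (hodd : Odd n)
    (r₁ s₁ r₂ s₂ : ZMod n) (hr₁ : r₁ ≠ 0) (hs₁ : s₁ ≠ 0) (hr₂ : r₂ ≠ 0)
    (hs₂ : s₂ ≠ 0) (h : r₁ * s₂ = r₂ * s₁)
    (k : ZMod n) (hk : k = r₁⁻¹ * r₂) :
    spectrum ℂ ((1 / 2 : ℂ) • (Mmat n r₁ s₁ + Mmat n r₂ s₂)) =
      Set.range (fun d : ZMod n =>
        ((1 / 2 * (Real.cos (2 * Real.pi * d.val / n) +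
          Real.cos (2 * Real.pi *
            ((-(k * (k - 1) * (2 : ZMod n)⁻¹ * r₁ * s₁) + k * d).val) / n)) : ℝ) : ℂ)) :=
  stmt17_general n hodd r₁ s₁ r₂ s₂ hr₁ hs₁ h k hk
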